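/- Let ν > 0, s ∈ {1, −1}, y₀ ∈ ℝ. For (x̂, t) ∈ ℝ² define φ(x̂,t) = 2ν(x̂ + t/(4ν²) − y₀), û(x̂,t) = −(s/ν)/cosh(φ(x̂,t)), p(x̂,t) = 2·tanh²(φ(x̂,t)) − 1, and x(x̂,t) = x̂ + (1/ν)(1 − tanh(φ(x̂,t))). Then at every point (x̂,t): (i) ∂_{x̂} x = p; (ii) ∂_t x = −(1/2)·û²; (iii) p² + (∂_{x̂} û)² = 1; (iv) ∂_t p = −(1/2)·∂_{x̂}(û²). -/

import Mathlib

/-- The phase `φ(x̂,t) = 2ν(x̂ + t/(4ν²) − y₀)` of the one-soliton. -/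
noncomputable def solPhi (ν y₀ xh t : ℝ) : ℝ := 2 * ν * (xh + t / (4 * ν ^ 2) - y₀)

/-- The one-soliton profile `û(x̂,t) = −(s/ν)/cosh φ`. -/
noncomputable def solU (ν s y₀ xh t : ℝ) : ℝ := -(s / ν) / Real.cosh (solPhi ν y₀ xh t)

/-- `p(x̂,t) = 2 tanh²φ − 1`. -/
noncomputable def solP (ν y₀ xh t : ℝ) : ℝ := 2 * Real.tanh (solPhi ν y₀ xh t) ^ 2 - 1

/-- The parametrized spatial variable `x(x̂,t) = x̂ + (1/ν)(1 − tanh φ)`. -/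
noncomputable def solX (ν y₀ xh t : ℝ) : ℝ :=
  xh + (1 / ν) * (1 - Real.tanh (solPhi ν y₀ xh t))

/-!
Everything depends on `(x̂, t)` through the phase `φ`, with `∂_x̂ φ = 2ν` and `∂_t φ = 1/(2ν)`.
Writing `T = tanh φ` and `C = cosh φ`, the chain rule gives `∂_x̂ x = 1 − 2/C²`,
`∂_t x = −1/(2ν²C²)`, `∂_x̂ û = 2sT/C` and `∂_t p = 2T/(νC²)`, while `û² = 1/(ν²C²)` as
`s² = 1`. The four identities are then algebraic consequences of `T² + 1/C² = 1`.
-/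
open Real

namespace Real

theorem tanh_sq_add_one_div_cosh_sq (x : ℝ) : tanh x ^ 2 + 1 / cosh x ^ 2 = 1 := by
  have hC : cosh x ≠ 0 := (cosh_pos x).ne'
  rw [tanh_eq_sinh_div_cosh]
  field_simp
  linear_combination -(cosh_sq x)

theorem hasDerivAt_tanh (x : ℝ) : HasDerivAt tanh (1 / cosh x ^ 2) x := by
  have hC : cosh x ≠ 0 := (cosh_pos x).ne'
  rw [show tanh = fun y => sinh y / cosh y from funext tanh_eq_sinh_div_cosh]
  refine ((hasDerivAt_sinh x).div (hasDerivAt_cosh x) hC).congr_deriv ?_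
  field_simp
  linear_combination cosh_sq x

end Real

theorem HasDerivAt.tanh {f : ℝ → ℝ} {f' x : ℝ} (hf : HasDerivAt f f' x) :
    HasDerivAt (fun x => Real.tanh (f x)) (1 / Real.cosh (f x) ^ 2 * f') x :=
  (Real.hasDerivAt_tanh (f x)).comp x hf

section OneSoliton

variable {ν s y₀ xh t : ℝ}

theorem hasDerivAt_solPhi_xh :
    HasDerivAt (fun y => solPhi ν y₀ y t) (2 * ν) xh :=
  (((hasDerivAt_id' xh).add_const (t / (4 * ν ^ 2))).sub_const y₀).const_mul (2 * ν)
    |>.congr_deriv (mul_one _)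

theorem hasDerivAt_solPhi_t (hν : ν ≠ 0) :
    HasDerivAt (fun τ => solPhi ν y₀ xh τ) (1 / (2 * ν)) t := by
  refine ((((hasDerivAt_id' t).div_const (4 * ν ^ 2)).const_add xh).sub_const y₀).const_mul
    (2 * ν) |>.congr_deriv ?_
  field_simp
  ring

theorem hasDerivAt_solX_xh (hν : ν ≠ 0) :
    HasDerivAt (fun y => solX ν y₀ y t) (1 - 2 / cosh (solPhi ν y₀ xh t) ^ 2) xh := by
  refine (hasDerivAt_id' xh).add
    ((hasDerivAt_solPhi_xh.tanh.const_sub 1).const_mul (1 / ν)) |>.congr_deriv ?_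
  field_simp
  ring

theorem hasDerivAt_solX_t (hν : ν ≠ 0) :
    HasDerivAt (fun τ => solX ν y₀ xh τ)
      (-1 / (2 * ν ^ 2 * cosh (solPhi ν y₀ xh t) ^ 2)) t := by
  refine (((hasDerivAt_solPhi_t hν).tanh.const_sub 1).const_mul (1 / ν)).const_add xh
    |>.congr_deriv ?_
  field_simp

theorem hasDerivAt_solU_xh (hν : ν ≠ 0) :
    HasDerivAt (fun y => solU ν s y₀ y t)
      (2 * s * tanh (solPhi ν y₀ xh t) / cosh (solPhi ν y₀ xh t)) xh := by
  have hC : cosh (solPhi ν y₀ xh t) ≠ 0 := (cosh_pos _).ne'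
  refine ((hasDerivAt_const xh (-(s / ν))).div hasDerivAt_solPhi_xh.cosh hC)
    |>.congr_deriv ?_
  rw [tanh_eq_sinh_div_cosh]
  field_simp
  ring

theorem hasDerivAt_solP_t (hν : ν ≠ 0) :
    HasDerivAt (fun τ => solP ν y₀ xh τ)
      (2 * tanh (solPhi ν y₀ xh t) / (ν * cosh (solPhi ν y₀ xh t) ^ 2)) t := by
  refine ((((hasDerivAt_solPhi_t hν).tanh.fun_pow 2).const_mul 2).sub_const 1)
    |>.congr_deriv ?_
  field_simp
  ring

theorem solU_sq (hs : s ^ 2 = 1) :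
    solU ν s y₀ xh t ^ 2 = 1 / (ν ^ 2 * cosh (solPhi ν y₀ xh t) ^ 2) := by
  rw [solU, div_pow, neg_sq, div_pow, hs]
  field_simp

theorem solP_eq_one_sub :
    solP ν y₀ xh t = 1 - 2 / cosh (solPhi ν y₀ xh t) ^ 2 := by
  rw [solP]
  linear_combination 2 * tanh_sq_add_one_div_cosh_sq (solPhi ν y₀ xh t)

end OneSoliton

/-- The one-soliton of the short pulse equation satisfies, in parametric form:
`∂_x̂ x = p`, `∂_t x = −û²/2`, `p² + (∂_x̂ û)² = 1`, and `∂_t p = −(1/2)∂_x̂(û²)`. -/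
theorem one_soliton_parametric_identities (ν s y₀ : ℝ) (hν : 0 < ν)
    (hs : s = 1 ∨ s = -1) :
    ∀ xh t : ℝ,
      deriv (fun y => solX ν y₀ y t) xh = solP ν y₀ xh t ∧
      deriv (fun τ => solX ν y₀ xh τ) t = -(1 / 2) * (solU ν s y₀ xh t) ^ 2 ∧
      (solP ν y₀ xh t) ^ 2 + (deriv (fun y => solU ν s y₀ y t) xh) ^ 2 = 1 ∧
      deriv (fun τ => solP ν y₀ xh τ) t
        = -(1 / 2) * deriv (fun y => (solU ν s y₀ y t) ^ 2) xh := by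
  intro xh t
  have hν0 : ν ≠ 0 := hν.ne'
  have hs2 : s ^ 2 = 1 := by rcases hs with rfl | rfl <;> norm_num
  have hU : HasDerivAt (fun y => solU ν s y₀ y t) _ xh := hasDerivAt_solU_xh hν0
  have hT := tanh_sq_add_one_div_cosh_sq (solPhi ν y₀ xh t)
  refine ⟨?_, ?_, ?_, ?_⟩
  · rw [(hasDerivAt_solX_xh hν0).deriv, solP_eq_one_sub]
  · rw [(hasDerivAt_solX_t hν0).deriv, solU_sq hs2]
    ring
  · rw [hU.deriv, solP]
    linear_combination
      4 * tanh (solPhi ν y₀ xh t) ^ 2 / cosh (solPhi ν y₀ xh t) ^ 2 * hs2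
        + 4 * tanh (solPhi ν y₀ xh t) ^ 2 * hT
  · rw [(hasDerivAt_solP_t hν0).deriv, (hU.fun_pow 2).deriv, solU]
    linear_combination
      (-2) * tanh (solPhi ν y₀ xh t) / (ν * cosh (solPhi ν y₀ xh t) ^ 2) * hs2
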